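/- Let r > 1/2 and let γ satisfy 0 ≤ γ ≤ 1. There exists a constant c > 0, depending only on r and γ, with the following property: for every τ ≥ 0 and every sequence v : ℤ → ℂ with ‖v‖_{r+2γ} < ∞, the sequence R : ℤ → ℂ defined by R_k = Σ_{k₁+k₂+k₃=k} ( ∫₀^τ (e^{2is k₁ k} − 1)(e^{2is k₂ k₃} − 1) ds ) · conj(v_{k₁}) v_{k₂} v_{k₃} (the inner sum over all triples (k₁,k₂,k₃) ∈ ℤ³ with k₁+k₂+k₃ = k converges absolutely) satisfies ‖R‖_r ≤ c τ^{1+2γ} ‖v‖_{r+γ}² ‖v‖_{r+2γ}. -/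

import Mathlib

open MeasureTheory
open scoped ENNReal ComplexConjugate

/-!
Write `⟨k⟩ = 1 + |k|`. Since `|e^{ix} - 1| ≤ min 2 |x| ≤ 2^{1-γ} |x|^γ`, the phase integral with
frequencies `k₁k` and `k₂k₃` is at most `4 τ^{1+2γ} (⟨k₁⟩⟨k⟩⟨k₂⟩⟨k₃⟩)^γ`. Splitting
`⟨k⟩^{r+γ} ≤ 3^{r+γ} (⟨k₁⟩^{r+γ} + ⟨k₂⟩^{r+γ} + ⟨k₃⟩^{r+γ})` and using the symmetry of the triple
convolution gives `⟨k⟩^r |R_k| ≤ 12 · 3^{r+γ} τ^{1+2γ} (b ∗ b ∗ w)_k` with `b_j = ⟨j⟩^γ |v_j|` and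
`w_j = ⟨j⟩^{r+2γ} |v_j|`. Young's inequality `‖b ∗ b ∗ w‖_{ℓ²} ≤ ‖b‖_{ℓ¹}² ‖w‖_{ℓ²}` and
Cauchy–Schwarz `‖b‖_{ℓ¹}² ≤ (∑ ⟨j⟩^{-2r}) ‖v‖_{r+γ}²`, finite because `2r > 1`, conclude.
All these series are summed in `ℝ≥0∞`, where they need no summability hypotheses.
-/

/-- Weighted `H^r`-type norm of a sequence of Fourier coefficients. -/
noncomputable def wnorm (r : ℝ) (a : ℤ → ℂ) : ℝ :=
  Real.sqrt (∑' k : ℤ, (1 + |(k : ℝ)|) ^ (2 * r) * norm (a k) ^ 2)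

theorem ENNReal.tsum_mul_sq_le_sq_mul_sq {ι : Type*} (f g : ι → ℝ≥0∞) :
    (∑' i, f i * g i) ^ 2 ≤ (∑' i, f i ^ 2) * ∑' i, g i ^ 2 := by
  let _ : MeasurableSpace ι := ⊤
  have h := ENNReal.lintegral_mul_le_Lp_mul_Lq Measure.count Real.HolderConjugate.two_two
    measurable_from_top.aemeasurable measurable_from_top.aemeasurable (f := f) (g := g)
  simp only [lintegral_count, Pi.mul_apply, ENNReal.rpow_two] at h
  calc (∑' i, f i * g i) ^ 2
      ≤ ((∑' i, f i ^ 2) ^ (1 / 2 : ℝ) * (∑' i, g i ^ 2) ^ (1 / 2 : ℝ)) ^ 2 :=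
        pow_le_pow_left' h 2
    _ = (∑' i, f i ^ 2) * ∑' i, g i ^ 2 := by
        rw [mul_pow, ← ENNReal.rpow_natCast, ← ENNReal.rpow_natCast _ 2, ← ENNReal.rpow_mul,
          ← ENNReal.rpow_mul]
        norm_num

theorem ENNReal.tsum_mul_sq_le_weight_mul_sq {ι : Type*} (μ x : ι → ℝ≥0∞) :
    (∑' i, μ i * x i) ^ 2 ≤ (∑' i, μ i) * ∑' i, μ i * x i ^ 2 := by
  have hsqrt : ∀ i, (μ i ^ (1 / 2 : ℝ)) ^ 2 = μ i := fun i => by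
    rw [← ENNReal.rpow_natCast, ← ENNReal.rpow_mul]; norm_num
  have h := ENNReal.tsum_mul_sq_le_sq_mul_sq (fun i => μ i ^ (1 / 2 : ℝ))
    (fun i => μ i ^ (1 / 2 : ℝ) * x i)
  simp only [mul_pow, hsqrt, ← mul_assoc, ← sq] at h
  exact h

theorem ENNReal.tsum_prod_mul {α β : Type*} (f : α → ℝ≥0∞) (g : β → ℝ≥0∞) :
    ∑' p : α × β, f p.1 * g p.2 = (∑' a, f a) * ∑' b, g b := by
  rw [ENNReal.tsum_prod', ← ENNReal.tsum_mul_right]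
  simp_rw [ENNReal.tsum_mul_left]

noncomputable def conv3 (f g h : ℤ → ℝ≥0∞) (k : ℤ) : ℝ≥0∞ :=
  ∑' p : ℤ × ℤ, f p.1 * g p.2 * h (k - p.1 - p.2)

theorem conv3_rotate (f g h : ℤ → ℝ≥0∞) (k : ℤ) : conv3 f g h k = conv3 g h f k := by
  let e : ℤ × ℤ ≃ ℤ × ℤ :=
    { toFun := fun p => (p.2, k - p.1 - p.2)
      invFun := fun q => (k - q.1 - q.2, q.1)
      left_inv := fun p => by ext <;> simp
      right_inv := fun q => by ext <;> simp; ring }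
  rw [conv3, conv3, ← e.tsum_eq (fun q => g q.1 * h q.2 * f (k - q.1 - q.2))]
  refine tsum_congr fun p => ?_
  simp only [e, Equiv.coe_fn_mk]
  ring_nf

theorem conv3_swap (f g h : ℤ → ℝ≥0∞) (k : ℤ) : conv3 f g h k = conv3 f h g k := by
  let e : ℤ × ℤ ≃ ℤ × ℤ :=
    { toFun := fun p => (p.1, k - p.1 - p.2)
      invFun := fun q => (q.1, k - q.1 - q.2)
      left_inv := fun p => by ext <;> simp
      right_inv := fun q => by ext <;> simp }
  rw [conv3, conv3, ← e.tsum_eq (fun q => f q.1 * h q.2 * g (k - q.1 - q.2))]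
  refine tsum_congr fun p => ?_
  simp only [e, Equiv.coe_fn_mk]
  ring_nf

theorem conv3_le_tsum_mul (f g h : ℤ → ℝ≥0∞) (k : ℤ) :
    conv3 f g h k ≤ (∑' i, f i) * (∑' j, g j) * ∑' m, h m := by
  rw [← ENNReal.tsum_prod_mul, ← ENNReal.tsum_mul_right]
  exact ENNReal.tsum_le_tsum fun p => by gcongr; exact ENNReal.le_tsum _

theorem tsum_conv3_sq_le (f g h : ℤ → ℝ≥0∞) :
    ∑' k, conv3 f g h k ^ 2 ≤ ((∑' i, f i) * ∑' j, g j) ^ 2 * ∑' m, h m ^ 2 := by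
  have hshift : ∀ n : ℤ, ∑' k, h (k - n) ^ 2 = ∑' m, h m ^ 2 := fun n =>
    (Equiv.subRight n).tsum_eq (fun m => h m ^ 2)
  calc ∑' k, conv3 f g h k ^ 2
      ≤ ∑' k, (∑' i, f i) * (∑' j, g j) *
          ∑' p : ℤ × ℤ, f p.1 * g p.2 * h (k - p.1 - p.2) ^ 2 := by
        refine ENNReal.tsum_le_tsum fun k => ?_
        rw [← ENNReal.tsum_prod_mul]
        exact ENNReal.tsum_mul_sq_le_weight_mul_sq _ _
    _ = (∑' i, f i) * (∑' j, g j) *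
          ∑' p : ℤ × ℤ, f p.1 * g p.2 * ∑' k, h (k - (p.1 + p.2)) ^ 2 := by
        rw [ENNReal.tsum_mul_left, ENNReal.tsum_comm]
        simp_rw [ENNReal.tsum_mul_left, sub_sub]
    _ = ((∑' i, f i) * ∑' j, g j) ^ 2 * ∑' m, h m ^ 2 := by
        simp_rw [hshift, ENNReal.tsum_mul_right, ENNReal.tsum_prod_mul]
        ring

noncomputable def weightedAbs (σ : ℝ) (a : ℤ → ℂ) (j : ℤ) : ℝ≥0∞ :=
  ENNReal.ofReal ((1 + |(j : ℝ)|) ^ σ) * ‖a j‖ₑ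

theorem ofReal_rpow_mul_weightedAbs (s σ : ℝ) (a : ℤ → ℂ) (j : ℤ) :
    ENNReal.ofReal ((1 + |(j : ℝ)|) ^ s) * weightedAbs σ a j = weightedAbs (s + σ) a j := by
  rw [weightedAbs, weightedAbs, ← mul_assoc, ← ENNReal.ofReal_mul (by positivity),
    ← Real.rpow_add (by positivity)]

theorem weightedAbs_sq (σ : ℝ) (a : ℤ → ℂ) (j : ℤ) :
    weightedAbs σ a j ^ 2 = ENNReal.ofReal ((1 + |(j : ℝ)|) ^ (2 * σ) * ‖a j‖ ^ 2) := by
  rw [weightedAbs, mul_pow, ← ENNReal.ofReal_pow (by positivity), ← Real.rpow_natCast,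
    ← Real.rpow_mul (by positivity), ENNReal.ofReal_mul (by positivity), ← ofReal_norm,
    ENNReal.ofReal_pow (norm_nonneg _)]
  norm_num [mul_comm σ]

theorem weightedAbs_mono {σ σ' : ℝ} (h : σ ≤ σ') (a : ℤ → ℂ) (j : ℤ) :
    weightedAbs σ a j ≤ weightedAbs σ' a j := by
  unfold weightedAbs
  gcongr
  exact le_add_of_nonneg_right (abs_nonneg _)

theorem tsum_weightedAbs_sq_mono {σ σ' : ℝ} (h : σ ≤ σ') (a : ℤ → ℂ) :
    ∑' j, weightedAbs σ a j ^ 2 ≤ ∑' j, weightedAbs σ' a j ^ 2 :=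
  ENNReal.tsum_le_tsum fun j => by gcongr; exact weightedAbs_mono h a j

-- Also for divergent series, where both `tsum` (in `ℝ`) and `toReal ∞` are `0`.
theorem wnorm_eq_sqrt_toReal (σ : ℝ) (a : ℤ → ℂ) :
    wnorm σ a = √((∑' j, weightedAbs σ a j ^ 2).toReal) := by
  rw [wnorm, ENNReal.tsum_toReal_eq fun j => by simp [weightedAbs_sq]]
  simp only [weightedAbs_sq]
  exact congrArg _ (tsum_congr fun j => (ENNReal.toReal_ofReal (by positivity)).symm)

theorem tsum_weightedAbs_sq_ne_top {σ : ℝ} {a : ℤ → ℂ}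
    (ha : Summable fun j : ℤ => (1 + |(j : ℝ)|) ^ (2 * σ) * ‖a j‖ ^ 2) :
    ∑' j, weightedAbs σ a j ^ 2 ≠ ∞ := by
  simp only [weightedAbs_sq]
  rw [← ENNReal.ofReal_tsum_of_nonneg (fun _ => by positivity) ha]
  exact ENNReal.ofReal_ne_top

theorem summable_one_add_abs_intCast_rpow_neg {β : ℝ} (hβ : 1 < β) :
    Summable fun j : ℤ => (1 + |(j : ℝ)|) ^ (-β) := by
  refine Summable.of_norm_bounded_eventually (Real.summable_abs_int_rpow hβ) ?_
  filter_upwards [Filter.eventually_cofinite_ne 0] with j hj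
  rw [Real.norm_of_nonneg (by positivity)]
  exact Real.rpow_le_rpow_of_nonpos (by positivity) (by linarith) (by linarith)

theorem sq_tsum_weightedAbs_le {r : ℝ} (hr : 1 / 2 < r) (σ : ℝ) (a : ℤ → ℂ) :
    (∑' j, weightedAbs σ a j) ^ 2 ≤
      ENNReal.ofReal (∑' j : ℤ, (1 + |(j : ℝ)|) ^ (-(2 * r))) *
        ∑' j, weightedAbs (r + σ) a j ^ 2 := by
  have hprod : ∀ j : ℤ, ENNReal.ofReal ((1 + |(j : ℝ)|) ^ (-r)) * weightedAbs (r + σ) a j =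
      weightedAbs σ a j := fun j => by
    rw [ofReal_rpow_mul_weightedAbs, neg_add_cancel_left]
  have hsq : ∀ j : ℤ, ENNReal.ofReal ((1 + |(j : ℝ)|) ^ (-r)) ^ 2 =
      ENNReal.ofReal ((1 + |(j : ℝ)|) ^ (-(2 * r))) := fun j => by
    rw [← ENNReal.ofReal_pow (by positivity), ← Real.rpow_natCast,
      ← Real.rpow_mul (by positivity)]
    norm_num [mul_comm]
  have h := ENNReal.tsum_mul_sq_le_sq_mul_sq
    (fun j : ℤ => ENNReal.ofReal ((1 + |(j : ℝ)|) ^ (-r))) (weightedAbs (r + σ) a)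
  simp only [hprod, hsq] at h
  rwa [← ENNReal.ofReal_tsum_of_nonneg (fun _ => by positivity)
    (summable_one_add_abs_intCast_rpow_neg (by linarith))] at h

theorem tsum_weightedAbs_ne_top {r σ : ℝ} (hr : 1 / 2 < r) {a : ℤ → ℂ}
    (ha : ∑' j, weightedAbs (r + σ) a j ^ 2 ≠ ∞) : ∑' j, weightedAbs σ a j ≠ ∞ := by
  have h := (sq_tsum_weightedAbs_le hr σ a).trans_lt
    (ENNReal.mul_lt_top ENNReal.ofReal_lt_top ha.lt_top)
  exact ((ENNReal.pow_lt_top_iff.mp h).resolve_right two_ne_zero).ne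

theorem min_le_rpow_mul_rpow {a x γ : ℝ} (ha : 0 ≤ a) (hx : 0 ≤ x) (h0 : 0 ≤ γ)
    (h1 : γ ≤ 1) :
    min a x ≤ a ^ (1 - γ) * x ^ γ := by
  have hm : 0 ≤ min a x := le_min ha hx
  calc min a x = min a x ^ (1 - γ) * min a x ^ γ := by
        rw [← Real.rpow_add' hm (by norm_num), sub_add_cancel, Real.rpow_one]
    _ ≤ a ^ (1 - γ) * x ^ γ := by
        have h1γ : 0 ≤ 1 - γ := by linarith
        gcongr
        exacts [min_le_left a x, min_le_right a x]

theorem Complex.norm_exp_I_mul_ofReal_sub_one_le_rpow {γ : ℝ} (h0 : 0 ≤ γ) (h1 : γ ≤ 1)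
    (x : ℝ) : ‖exp (I * x) - 1‖ ≤ 2 ^ (1 - γ) * |x| ^ γ := by
  have hle_two : ‖exp (I * x) - 1‖ ≤ 2 := by
    simpa [norm_exp_I_mul_ofReal, one_add_one_eq_two] using norm_sub_le (exp (I * x)) 1
  calc ‖exp (I * x) - 1‖ ≤ min 2 |x| := le_min hle_two Real.norm_exp_I_mul_ofReal_sub_one_le
    _ ≤ _ := min_le_rpow_mul_rpow zero_le_two (abs_nonneg x) h0 h1

theorem norm_exp_two_I_mul_sub_one_le {γ s : ℝ} (h0 : 0 ≤ γ) (h1 : γ ≤ 1) (hs : 0 ≤ s)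
    (n : ℤ) :
    ‖Complex.exp (2 * Complex.I * s * n) - 1‖ ≤ 2 * s ^ γ * |(n : ℝ)| ^ γ := by
  have harg : 2 * Complex.I * s * n = Complex.I * ((2 * s * n : ℝ) : ℂ) := by
    push_cast; ring
  rw [harg]
  refine (Complex.norm_exp_I_mul_ofReal_sub_one_le_rpow h0 h1 _).trans (le_of_eq ?_)
  rw [abs_mul, abs_mul, abs_two, abs_of_nonneg hs, Real.mul_rpow (by positivity) (abs_nonneg _),
    Real.mul_rpow zero_le_two hs]
  have : (2 : ℝ) ^ (1 - γ) * 2 ^ γ = 2 := by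
    rw [← Real.rpow_add zero_lt_two, sub_add_cancel, Real.rpow_one]
  linear_combination s ^ γ * |(n : ℝ)| ^ γ * this

noncomputable def phaseIntegral (τ : ℝ) (n₁ n₂ : ℤ) : ℂ :=
  ∫ s in (0 : ℝ)..τ,
    (Complex.exp (2 * Complex.I * s * n₁) - 1) * (Complex.exp (2 * Complex.I * s * n₂) - 1)

theorem norm_phaseIntegral_le {γ τ : ℝ} (h0 : 0 ≤ γ) (h1 : γ ≤ 1) (hτ : 0 ≤ τ)
    (n₁ n₂ : ℤ) :
    ‖phaseIntegral τ n₁ n₂‖ ≤ 4 * τ ^ (1 + 2 * γ) * (|(n₁ : ℝ)| ^ γ * |(n₂ : ℝ)| ^ γ) := by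
  set C := 4 * (|(n₁ : ℝ)| ^ γ * |(n₂ : ℝ)| ^ γ)
  have hC : 0 ≤ C := by positivity
  have hpointwise : ∀ s ∈ Set.Ioc 0 τ, ‖(Complex.exp (2 * Complex.I * s * n₁) - 1) *
      (Complex.exp (2 * Complex.I * s * n₂) - 1)‖ ≤ C * s ^ (2 * γ) := by
    rintro s ⟨hs, -⟩
    rw [norm_mul, mul_comm 2 γ, Real.rpow_mul hs.le, Real.rpow_two]
    calc _ ≤ (2 * s ^ γ * |(n₁ : ℝ)| ^ γ) * (2 * s ^ γ * |(n₂ : ℝ)| ^ γ) := by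
          gcongr <;> exact norm_exp_two_I_mul_sub_one_le h0 h1 hs.le _
      _ = C * (s ^ γ) ^ 2 := by ring
  have hint :
      ∫ s in (0 : ℝ)..τ, C * s ^ (2 * γ) = C * (τ ^ (2 * γ + 1) / (2 * γ + 1)) := by
    rw [intervalIntegral.integral_const_mul, integral_rpow (Or.inl (by linarith)),
      Real.zero_rpow (by positivity), sub_zero]
  calc ‖phaseIntegral τ n₁ n₂‖ ≤ ∫ s in (0 : ℝ)..τ, C * s ^ (2 * γ) :=
        intervalIntegral.norm_integral_le_of_norm_le hτ
          (Filter.Eventually.of_forall hpointwise)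
          ((intervalIntegral.intervalIntegrable_rpow' (by linarith)).const_mul C)
    _ ≤ C * τ ^ (2 * γ + 1) := by
        rw [hint]
        gcongr
        exact div_le_self (by positivity) (by linarith)
    _ = _ := by rw [add_comm (2 * γ)]; ring

theorem abs_intCast_mul_rpow_le {γ : ℝ} (h0 : 0 ≤ γ) (a b : ℤ) :
    |((a * b : ℤ) : ℝ)| ^ γ ≤ (1 + |(a : ℝ)|) ^ γ * (1 + |(b : ℝ)|) ^ γ := by
  rw [Int.cast_mul, abs_mul, Real.mul_rpow (abs_nonneg _) (abs_nonneg _)]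
  gcongr <;> linarith

theorem one_add_abs_add_rpow_le {s : ℝ} (hs : 0 ≤ s) (x y z : ℝ) :
    (1 + |x + y + z|) ^ s ≤ 3 ^ s * ((1 + |x|) ^ s + (1 + |y|) ^ s + (1 + |z|) ^ s) := by
  have hsum : 1 + |x + y + z| ≤ (1 + |x|) + (1 + |y|) + (1 + |z|) := by
    linarith [abs_add_three x y z]
  have hx := Real.rpow_nonneg (by positivity : (0 : ℝ) ≤ 1 + |x|) s
  have hy := Real.rpow_nonneg (by positivity : (0 : ℝ) ≤ 1 + |y|) s
  have hz := Real.rpow_nonneg (by positivity : (0 : ℝ) ≤ 1 + |z|) s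
  have h3 : (0 : ℝ) ≤ 3 ^ s := by positivity
  obtain h | h | h : 1 + |x + y + z| ≤ 3 * (1 + |x|) ∨ 1 + |x + y + z| ≤ 3 * (1 + |y|) ∨
      1 + |x + y + z| ≤ 3 * (1 + |z|) := by
    by_contra! h; linarith
  all_goals
    refine (Real.rpow_le_rpow (by positivity) h hs).trans ?_
    rw [Real.mul_rpow (by norm_num) (by positivity)]
    nlinarith

-- The paper's triple `(k₁, k₂, k₃)` is `(p.1, p.2, k - p.1 - p.2)`.
noncomputable def cubicSummand (τ : ℝ) (v : ℤ → ℂ) (k : ℤ) (p : ℤ × ℤ) : ℂ :=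
  phaseIntegral τ (p.1 * k) (p.2 * (k - p.1 - p.2)) *
    (conj (v p.1) * v p.2 * v (k - p.1 - p.2))

theorem enorm_cubicSummand_le {γ τ : ℝ} (h0 : 0 ≤ γ) (h1 : γ ≤ 1) (hτ : 0 ≤ τ) (v : ℤ → ℂ)
    (k : ℤ) (p : ℤ × ℤ) :
    ‖cubicSummand τ v k p‖ₑ ≤ ENNReal.ofReal (4 * τ ^ (1 + 2 * γ)) *
      ENNReal.ofReal ((1 + |(k : ℝ)|) ^ γ) *
        (weightedAbs γ v p.1 * weightedAbs γ v p.2 * weightedAbs γ v (k - p.1 - p.2)) := by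
  obtain ⟨a, c⟩ := p
  set m := k - a - c
  have hphase : ‖phaseIntegral τ (a * k) (c * m)‖ ≤ 4 * τ ^ (1 + 2 * γ) *
      (((1 + |(a : ℝ)|) ^ γ * (1 + |(k : ℝ)|) ^ γ) *
        ((1 + |(c : ℝ)|) ^ γ * (1 + |(m : ℝ)|) ^ γ)) :=
    (norm_phaseIntegral_le h0 h1 hτ _ _).trans <| by
      gcongr <;> exact abs_intCast_mul_rpow_le h0 _ _
  calc ‖cubicSummand τ v k (a, c)‖ₑ
      = ‖phaseIntegral τ (a * k) (c * m)‖ₑ * (‖v a‖ₑ * ‖v c‖ₑ * ‖v m‖ₑ) := by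
        simp only [cubicSummand, enorm_mul, RCLike.enorm_conj, m]
    _ ≤ ENNReal.ofReal (4 * τ ^ (1 + 2 * γ) *
          (((1 + |(a : ℝ)|) ^ γ * (1 + |(k : ℝ)|) ^ γ) *
            ((1 + |(c : ℝ)|) ^ γ * (1 + |(m : ℝ)|) ^ γ))) * (‖v a‖ₑ * ‖v c‖ₑ * ‖v m‖ₑ) := by
        gcongr
        rw [← ofReal_norm]
        exact ENNReal.ofReal_le_ofReal hphase
    _ = _ := by
        simp only [weightedAbs,
          ENNReal.ofReal_mul (by positivity : (0 : ℝ) ≤ 4 * τ ^ (1 + 2 * γ)),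
          ENNReal.ofReal_mul (by positivity : (0 : ℝ) ≤ (1 + |(a : ℝ)|) ^ γ),
          ENNReal.ofReal_mul (by positivity : (0 : ℝ) ≤ (1 + |(c : ℝ)|) ^ γ),
          ENNReal.ofReal_mul (by positivity : (0 : ℝ) ≤
            (1 + |(a : ℝ)|) ^ γ * (1 + |(k : ℝ)|) ^ γ)]
        ring

theorem tsum_enorm_cubicSummand_le {γ τ : ℝ} (h0 : 0 ≤ γ) (h1 : γ ≤ 1) (hτ : 0 ≤ τ)
    (v : ℤ → ℂ) (k : ℤ) :
    ∑' p, ‖cubicSummand τ v k p‖ₑ ≤ ENNReal.ofReal (4 * τ ^ (1 + 2 * γ)) *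
      ENNReal.ofReal ((1 + |(k : ℝ)|) ^ γ) *
        conv3 (weightedAbs γ v) (weightedAbs γ v) (weightedAbs γ v) k := by
  rw [conv3, ← ENNReal.tsum_mul_left]
  exact ENNReal.tsum_le_tsum (enorm_cubicSummand_le h0 h1 hτ v k)

theorem summable_norm_cubicSummand {γ τ : ℝ} (h0 : 0 ≤ γ) (h1 : γ ≤ 1) (hτ : 0 ≤ τ)
    {v : ℤ → ℂ} (hv : ∑' j, weightedAbs γ v j ≠ ∞) (k : ℤ) :
    Summable fun p => ‖cubicSummand τ v k p‖ := by
  refine tsum_enorm_ne_top_iff_summable_norm.mp (ne_top_of_le_ne_top ?_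
    ((tsum_enorm_cubicSummand_le h0 h1 hτ v k).trans
      (mul_le_mul_right (conv3_le_tsum_mul _ _ _ k) _)))
  exact ENNReal.mul_ne_top (ENNReal.mul_ne_top ENNReal.ofReal_ne_top ENNReal.ofReal_ne_top)
    (ENNReal.mul_ne_top (ENNReal.mul_ne_top hv hv) hv)

theorem ofReal_rpow_mul_conv3_le {s : ℝ} (hs : 0 ≤ s) (γ : ℝ) (a : ℤ → ℂ) (k : ℤ) :
    ENNReal.ofReal ((1 + |(k : ℝ)|) ^ s) *
        conv3 (weightedAbs γ a) (weightedAbs γ a) (weightedAbs γ a) k ≤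
      3 * ENNReal.ofReal (3 ^ s) *
        conv3 (weightedAbs γ a) (weightedAbs γ a) (weightedAbs (s + γ) a) k := by
  set b := weightedAbs γ a
  set W : ℤ → ℝ≥0∞ := fun j => ENNReal.ofReal ((1 + |(j : ℝ)|) ^ s)
  have hsplit : ∀ p : ℤ × ℤ,
      W k ≤ ENNReal.ofReal (3 ^ s) * (W p.1 + W p.2 + W (k - p.1 - p.2)) := by
    intro p
    have hk : (k : ℝ) = p.1 + p.2 + ((k - p.1 - p.2 : ℤ) : ℝ) := by push_cast; ring
    simp only [W]
    rw [← ENNReal.ofReal_add (by positivity) (by positivity),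
      ← ENNReal.ofReal_add (by positivity) (by positivity),
      ← ENNReal.ofReal_mul (by positivity), hk]
    exact ENNReal.ofReal_le_ofReal (one_add_abs_add_rpow_le hs _ _ _)
  have hW : ∀ j, W j * b j = weightedAbs (s + γ) a j := ofReal_rpow_mul_weightedAbs s γ a
  calc W k * conv3 b b b k
      = ∑' p : ℤ × ℤ, W k * (b p.1 * b p.2 * b (k - p.1 - p.2)) :=
        ENNReal.tsum_mul_left.symm
    _ ≤ ∑' p : ℤ × ℤ, ENNReal.ofReal (3 ^ s) * (W p.1 + W p.2 + W (k - p.1 - p.2)) *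
          (b p.1 * b p.2 * b (k - p.1 - p.2)) :=
        ENNReal.tsum_le_tsum fun p => by gcongr; exact hsplit p
    _ = ENNReal.ofReal (3 ^ s) * (conv3 (weightedAbs (s + γ) a) b b k +
          conv3 b (weightedAbs (s + γ) a) b k + conv3 b b (weightedAbs (s + γ) a) k) := by
        simp only [conv3, ← hW]
        rw [← ENNReal.tsum_add, ← ENNReal.tsum_add, ← ENNReal.tsum_mul_left]
        exact tsum_congr fun p => by ring
    _ = 3 * ENNReal.ofReal (3 ^ s) * conv3 b b (weightedAbs (s + γ) a) k := by
        rw [conv3_rotate (weightedAbs (s + γ) a), conv3_swap b (weightedAbs (s + γ) a)]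
        ring

theorem weightedAbs_cubicSum_le {r γ τ : ℝ} (hr : 0 ≤ r) (h0 : 0 ≤ γ) (h1 : γ ≤ 1)
    (hτ : 0 ≤ τ) (v : ℤ → ℂ) (k : ℤ) :
    weightedAbs r (fun k => ∑' p, cubicSummand τ v k p) k ≤
      ENNReal.ofReal (4 * τ ^ (1 + 2 * γ)) * (3 * ENNReal.ofReal (3 ^ (r + γ))) *
        conv3 (weightedAbs γ v) (weightedAbs γ v) (weightedAbs (r + 2 * γ) v) k := by
  set b := weightedAbs γ v
  calc weightedAbs r (fun k => ∑' p, cubicSummand τ v k p) k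
      ≤ ENNReal.ofReal ((1 + |(k : ℝ)|) ^ r) * (ENNReal.ofReal (4 * τ ^ (1 + 2 * γ)) *
          ENNReal.ofReal ((1 + |(k : ℝ)|) ^ γ) * conv3 b b b k) := by
        unfold weightedAbs
        gcongr
        exact enorm_tsum_le_tsum_enorm.trans (tsum_enorm_cubicSummand_le h0 h1 hτ v k)
    _ = ENNReal.ofReal (4 * τ ^ (1 + 2 * γ)) *
          (ENNReal.ofReal ((1 + |(k : ℝ)|) ^ (r + γ)) * conv3 b b b k) := by
        rw [Real.rpow_add (by positivity : (0 : ℝ) < 1 + |(k : ℝ)|),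
          ENNReal.ofReal_mul (by positivity : (0 : ℝ) ≤ (1 + |(k : ℝ)|) ^ r)]
        ring
    _ ≤ ENNReal.ofReal (4 * τ ^ (1 + 2 * γ)) *
          (3 * ENNReal.ofReal (3 ^ (r + γ)) * conv3 b b (weightedAbs (r + γ + γ) v) k) :=
        mul_le_mul_right (ofReal_rpow_mul_conv3_le (by linarith) γ v k) _
    _ = _ := by
        rw [show r + γ + γ = r + 2 * γ by ring]
        ring

theorem tsum_sq_weightedAbs_cubicSum_le {r γ τ : ℝ} (hr : 0 ≤ r) (h0 : 0 ≤ γ) (h1 : γ ≤ 1)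
    (hτ : 0 ≤ τ) (v : ℤ → ℂ) :
    ∑' k, weightedAbs r (fun k => ∑' p, cubicSummand τ v k p) k ^ 2 ≤
      (ENNReal.ofReal (4 * τ ^ (1 + 2 * γ)) * (3 * ENNReal.ofReal (3 ^ (r + γ))) *
        (∑' j, weightedAbs γ v j) ^ 2) ^ 2 * ∑' j, weightedAbs (r + 2 * γ) v j ^ 2 := by
  set K := ENNReal.ofReal (4 * τ ^ (1 + 2 * γ)) * (3 * ENNReal.ofReal (3 ^ (r + γ)))
  set b := weightedAbs γ v
  set w := weightedAbs (r + 2 * γ) v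
  calc ∑' k, weightedAbs r (fun k => ∑' p, cubicSummand τ v k p) k ^ 2
      ≤ ∑' k, (K * conv3 b b w k) ^ 2 :=
        ENNReal.tsum_le_tsum fun k => by gcongr; exact weightedAbs_cubicSum_le hr h0 h1 hτ v k
    _ = K ^ 2 * ∑' k, conv3 b b w k ^ 2 := by simp_rw [mul_pow]; exact ENNReal.tsum_mul_left
    _ ≤ K ^ 2 * (((∑' j, b j) * ∑' j, b j) ^ 2 * ∑' j, w j ^ 2) := by
        gcongr; exact tsum_conv3_sq_le b b w
    _ = _ := by ring

theorem wnorm_cubicSum_le {r γ τ : ℝ} (hr : 1 / 2 < r) (h0 : 0 ≤ γ) (h1 : γ ≤ 1)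
    (hτ : 0 ≤ τ) {v : ℤ → ℂ} (hv₁ : ∑' j, weightedAbs (r + γ) v j ^ 2 ≠ ∞)
    (hv₂ : ∑' j, weightedAbs (r + 2 * γ) v j ^ 2 ≠ ∞) :
    wnorm r (fun k => ∑' p, cubicSummand τ v k p) ≤
      12 * 3 ^ (r + γ) * (∑' j : ℤ, (1 + |(j : ℝ)|) ^ (-(2 * r))) * τ ^ (1 + 2 * γ) *
        wnorm (r + γ) v ^ 2 * wnorm (r + 2 * γ) v := by
  set C := ∑' j : ℤ, (1 + |(j : ℝ)|) ^ (-(2 * r))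
  have hC : 0 ≤ C := tsum_nonneg fun _ => by positivity
  set N₁ := ∑' j, weightedAbs (r + γ) v j ^ 2
  set N₂ := ∑' j, weightedAbs (r + 2 * γ) v j ^ 2
  have hbound : ∑' k, weightedAbs r (fun k => ∑' p, cubicSummand τ v k p) k ^ 2 ≤
      (ENNReal.ofReal (4 * τ ^ (1 + 2 * γ)) * (3 * ENNReal.ofReal (3 ^ (r + γ))) *
        (ENNReal.ofReal C * N₁)) ^ 2 * N₂ := by
    refine (tsum_sq_weightedAbs_cubicSum_le (by linarith) h0 h1 hτ v).trans ?_
    gcongr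
    exact sq_tsum_weightedAbs_le hr γ v
  have hfin : (ENNReal.ofReal (4 * τ ^ (1 + 2 * γ)) * (3 * ENNReal.ofReal (3 ^ (r + γ))) *
      (ENNReal.ofReal C * N₁)) ^ 2 * N₂ ≠ ∞ := by
    finiteness
  rw [wnorm_eq_sqrt_toReal, wnorm_eq_sqrt_toReal, wnorm_eq_sqrt_toReal,
    Real.sq_sqrt ENNReal.toReal_nonneg]
  calc _ ≤ √((4 * τ ^ (1 + 2 * γ) * (3 * 3 ^ (r + γ)) * (C * N₁.toReal)) ^ 2 * N₂.toReal) := by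
        refine Real.sqrt_le_sqrt ((ENNReal.toReal_mono hfin hbound).trans_eq ?_)
        simp only [ENNReal.toReal_mul, ENNReal.toReal_pow, ENNReal.toReal_ofNat,
          ENNReal.toReal_ofReal (by positivity : (0 : ℝ) ≤ 4 * τ ^ (1 + 2 * γ)),
          ENNReal.toReal_ofReal (by positivity : (0 : ℝ) ≤ 3 ^ (r + γ)),
          ENNReal.toReal_ofReal hC]
    _ = _ := by
        rw [Real.sqrt_mul' _ ENNReal.toReal_nonneg, Real.sqrt_sq (by positivity)]
        ring

theorem stmt5 (r γ : ℝ) (hr : 1 / 2 < r) (h0 : 0 ≤ γ) (h1 : γ ≤ 1) :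
    ∃ c > 0, ∀ τ : ℝ, 0 ≤ τ → ∀ v : ℤ → ℂ,
      Summable (fun k : ℤ =>
        (1 + |(k : ℝ)|) ^ (2 * (r + 2 * γ)) * norm (v k) ^ 2) →
      (∀ k : ℤ, Summable (fun p : ℤ × ℤ =>
        norm ((∫ s in (0 : ℝ)..τ,
            (Complex.exp (2 * Complex.I * s * ((p.1 * k : ℤ) : ℂ)) - 1) *
            (Complex.exp (2 * Complex.I * s * ((p.2 * (k - p.1 - p.2) : ℤ) : ℂ)) - 1)) *
          ((starRingEnd ℂ) (v p.1) * v p.2 * v (k - p.1 - p.2))))) ∧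
      wnorm r (fun k : ℤ => ∑' p : ℤ × ℤ,
          (∫ s in (0 : ℝ)..τ,
            (Complex.exp (2 * Complex.I * s * ((p.1 * k : ℤ) : ℂ)) - 1) *
            (Complex.exp (2 * Complex.I * s * ((p.2 * (k - p.1 - p.2) : ℤ) : ℂ)) - 1)) *
          ((starRingEnd ℂ) (v p.1) * v p.2 * v (k - p.1 - p.2)))
        ≤ c * τ ^ (1 + 2 * γ) * wnorm (r + γ) v ^ 2 * wnorm (r + 2 * γ) v := by
  have hC : 0 < ∑' j : ℤ, (1 + |(j : ℝ)|) ^ (-(2 * r)) :=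
    (summable_one_add_abs_intCast_rpow_neg (by linarith)).tsum_pos (fun _ => by positivity) 0
      (by simp)
  refine ⟨12 * 3 ^ (r + γ) * ∑' j : ℤ, (1 + |(j : ℝ)|) ^ (-(2 * r)), by positivity, ?_⟩
  intro τ hτ v hv
  have hv₂ := tsum_weightedAbs_sq_ne_top hv
  have hv₁ : ∑' j, weightedAbs (r + γ) v j ^ 2 ≠ ∞ :=
    ne_top_of_le_ne_top hv₂ (tsum_weightedAbs_sq_mono (by linarith) v)
  exact ⟨summable_norm_cubicSummand h0 h1 hτ (tsum_weightedAbs_ne_top hr hv₁),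
    wnorm_cubicSum_le hr h0 h1 hτ hv₁ hv₂⟩
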